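/- Let r, s, t, u be nonzero real numbers with |s/r| < 1 and |u/t| < 1. Then the α-dual of B[C_f] is L_u: a double sequence a = (a_{kl}) satisfies Σ_{k,l} |a_{kl} x_{kl}| < ∞ for every x ∈ B[C_f] if and only if Σ_{k,l} |a_{kl}| < ∞. -/

import Mathlib

open Finset

noncomputable section

/-- The four-dimensional generalized difference matrix `B(r,s,t,u)` acting on a
double sequence `x : ℕ × ℕ → ℂ`; terms with a negative index are taken to be `0`. -/
def Btrans (r s t u : ℝ) (x : ℕ × ℕ → ℂ) : ℕ × ℕ → ℂ := fun p =>
  (s * u : ℂ) * (if p.1 = 0 ∨ p.2 = 0 then 0 else x (p.1 - 1, p.2 - 1)) +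
  (s * t : ℂ) * (if p.1 = 0 then 0 else x (p.1 - 1, p.2)) +
  (r * u : ℂ) * (if p.2 = 0 then 0 else x (p.1, p.2 - 1)) +
  (r * t : ℂ) * x p

/-- `x` is strongly almost convergent to `L` ("[f2]-lim x = L"). -/
def StronglyAlmostConvTo (x : ℕ × ℕ → ℂ) (L : ℂ) : Prop :=
  ∀ ε > (0 : ℝ), ∃ Q : ℕ, ∀ q q' : ℕ, Q ≤ q → Q ≤ q' → ∀ m n : ℕ,
    (1 / (((q : ℝ) + 1) * ((q' : ℝ) + 1))) *
      ∑ k ∈ Finset.range (q + 1), ∑ l ∈ Finset.range (q' + 1),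
        ‖(x (m + k, n + l) - L)‖ < ε

/-- `x` is almost convergent to `L` ("f2-lim x = L"). -/
def AlmostConvTo (x : ℕ × ℕ → ℂ) (L : ℂ) : Prop :=
  ∀ ε > (0 : ℝ), ∃ Q : ℕ, ∀ q q' : ℕ, Q ≤ q → Q ≤ q' → ∀ m n : ℕ,
    ‖((1 / (((q : ℂ) + 1) * ((q' : ℂ) + 1))) *
      (∑ k ∈ Finset.range (q + 1), ∑ l ∈ Finset.range (q' + 1), x (m + k, n + l)) - L)‖ < ε

/-- The set of values whose supremum is the `[C_f]`-norm of `y`. -/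
def CfNormSet (y : ℕ × ℕ → ℂ) : Set ℝ :=
  {v | ∃ q q' m n : ℕ, v = (1 / (((q : ℝ) + 1) * ((q' : ℝ) + 1))) *
    ∑ k ∈ Finset.range (q + 1), ∑ l ∈ Finset.range (q' + 1), ‖(y (m + k, n + l))‖}

/-- The `[C_f]`-norm. -/
def CfNorm (y : ℕ × ℕ → ℂ) : ℝ := sSup (CfNormSet y)

/-- The formal inverse transform of `B(r,s,t,u)`. -/
def Binv (r s t u : ℝ) (y : ℕ × ℕ → ℂ) : ℕ × ℕ → ℂ := fun p =>
  (1 / (r * t : ℂ)) * ∑ k ∈ Finset.range (p.1 + 1), ∑ l ∈ Finset.range (p.2 + 1),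
    ((-s : ℂ) / r) ^ (p.1 - k) * ((-u : ℂ) / t) ^ (p.2 - l) * y (k, l)

/-- Pringsheim convergence of a double sequence. -/
def PConvTo (s : ℕ × ℕ → ℂ) (S : ℂ) : Prop :=
  ∀ ε > (0 : ℝ), ∃ N : ℕ, ∀ m n : ℕ, N ≤ m → N ≤ n → ‖(s (m, n) - S)‖ < ε

/-- Boundedness of a double sequence. -/
def Bdd2 (s : ℕ × ℕ → ℂ) : Prop := ∃ M : ℝ, ∀ m n : ℕ, ‖(s (m, n))‖ ≤ M

/-- bp-convergence: bounded Pringsheim convergence. -/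
def BPConvTo (s : ℕ × ℕ → ℂ) (S : ℂ) : Prop := Bdd2 s ∧ PConvTo s S

/-- Rectangular partial sums of a double series. -/
def PartialSums (c : ℕ × ℕ → ℂ) : ℕ × ℕ → ℂ := fun p =>
  ∑ k ∈ Finset.range (p.1 + 1), ∑ l ∈ Finset.range (p.2 + 1), c (k, l)

/-- bp-convergence of the double series `Σ c_{kl}`. -/
def BPSeriesConv (c : ℕ × ℕ → ℂ) : Prop := ∃ S, BPConvTo (PartialSums c) S

/-- Pringsheim convergence of a real double sequence. -/
def PConvToR (s : ℕ × ℕ → ℝ) (S : ℝ) : Prop :=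
  ∀ ε > (0 : ℝ), ∃ N : ℕ, ∀ m n : ℕ, N ≤ m → N ≤ n → |s (m, n) - S| < ε

/-- bp-convergence of a real double sequence. -/
def BPConvToR (s : ℕ × ℕ → ℝ) (S : ℝ) : Prop :=
  (∃ M : ℝ, ∀ m n : ℕ, |s (m, n)| ≤ M) ∧ PConvToR s S

/-- The rectangle `{(j,k) : m ≤ j ≤ m+p-1, n ≤ k ≤ n+q-1}`. -/
def rectSet (m n p q : ℕ) : Set (ℕ × ℕ) :=
  {jk | m ≤ jk.1 ∧ jk.1 ≤ m + p - 1 ∧ n ≤ jk.2 ∧ jk.2 ≤ n + q - 1}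

/-- `E` is uniformly of zero density. -/
def UnifZeroDensity (E : Set (ℕ × ℕ)) : Prop :=
  ∀ ε > (0 : ℝ), ∃ P : ℕ, ∀ p q : ℕ, P ≤ p → P ≤ q → ∀ m n : ℕ,
    ((E ∩ rectSet m n p q).ncard : ℝ) ≤ ε * p * q

/-- The inner sums `Σ_{j=k}^{m} Σ_{i=l}^{n} (−s/r)^{j−k} (−u/t)^{i−l} a_{ji}`. -/
def innerS (r s t u : ℝ) (a : ℕ × ℕ → ℂ) (k l m n : ℕ) : ℂ :=
  ∑ j ∈ Finset.Icc k m, ∑ i ∈ Finset.Icc l n,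
    ((-s : ℂ) / r) ^ (j - k) * ((-u : ℂ) / t) ^ (i - l) * a (j, i)

/-- The matrix `d_{mnkl}(a)` (taken to be `0` when `k > m` or `l > n`). -/
def dmat (r s t u : ℝ) (a : ℕ × ℕ → ℂ) (m n k l : ℕ) : ℂ :=
  innerS r s t u a k l m n / (r * t : ℂ)

/-- The double difference `Δ₁₁ a_{mnkl}`. -/
def Delta11 (A : ℕ × ℕ → ℕ × ℕ → ℂ) (m n k l : ℕ) : ℂ :=
  A (m, n) (k, l) - A (m, n) (k + 1, l) - A (m, n) (k, l + 1) + A (m, n) (k + 1, l + 1)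

/-- The matrix `e_{mnkl}` associated with a four-dimensional matrix `A`
(taken to be `0` when `k > m` or `l > n`). -/
def emat (r s t u : ℝ) (A : ℕ × ℕ → ℕ × ℕ → ℂ) (m n k l : ℕ) : ℂ :=
  ∑ i ∈ Finset.Icc k m, ∑ j ∈ Finset.Icc l n,
    ((-s : ℂ) / r) ^ (i - k) * ((-u : ℂ) / t) ^ (j - l) * A (m, n) (i, j) / (r * t : ℂ)

/-- `Δ₁₁` applied to the `e`-matrix. -/
def Delta11e (r s t u : ℝ) (A : ℕ × ℕ → ℕ × ℕ → ℂ) (m n k l : ℕ) : ℂ :=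
  emat r s t u A m n k l - emat r s t u A m n (k + 1) l -
    emat r s t u A m n k (l + 1) + emat r s t u A m n (k + 1) (l + 1)

end

/-!
Necessity: the constant sequence `1` lies in `B[C_f]`, because `B 1` equals `(r + s)(t + u)` off
the two coordinate axes and a bounded deviation supported on the axes is averaged away in large
windows. Sufficiency: strongly almost convergent sequences are bounded, and `B` is the tensor
product of two lower bidiagonal operators whose inverses have the geometrically decaying kernels
`(-s/r)^j` and `(-u/t)^i`; so `Bx` bounded forces `x` bounded, and `‖a x‖ ≤ K ‖a‖`.
-/

def bidiag (c d : ℂ) (y : ℕ → ℂ) (n : ℕ) : ℂ :=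
  c * y n + d * (if n = 0 then 0 else y (n - 1))

lemma sum_pow_mul_bidiag {c : ℂ} (hc : c ≠ 0) (d : ℂ) (y : ℕ → ℂ) (n : ℕ) :
    ∑ k ∈ range (n + 1), (-d / c) ^ (n - k) * bidiag c d y k = c * y n := by
  induction n with
  | zero => simp [bidiag]
  | succ n ih =>
    have hshift : ∑ k ∈ range (n + 1), (-d / c) ^ (n + 1 - k) * bidiag c d y k =
        (-d / c) * ∑ k ∈ range (n + 1), (-d / c) ^ (n - k) * bidiag c d y k := by
      rw [mul_sum]
      refine sum_congr rfl fun k hk => ?_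
      rw [Nat.sub_add_comm (Nat.lt_succ_iff.mp (mem_range.mp hk)), pow_succ]
      ring
    rw [sum_range_succ, hshift, ih, Nat.sub_self, pow_zero, one_mul, bidiag,
      if_neg n.succ_ne_zero, Nat.add_sub_cancel]
    field_simp
    ring

lemma norm_bidiag_le (c d : ℂ) {y : ℕ → ℂ} {M : ℝ} (hy : ∀ n, ‖y n‖ ≤ M) (n : ℕ) :
    ‖bidiag c d y n‖ ≤ (‖c‖ + ‖d‖) * M := by
  have hprev : ‖if n = 0 then 0 else y (n - 1)‖ ≤ M := by
    split_ifs
    · exact norm_zero.trans_le ((norm_nonneg _).trans (hy 0))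
    · exact hy _
  calc ‖bidiag c d y n‖ ≤ ‖c‖ * ‖y n‖ + ‖d‖ * ‖if n = 0 then 0 else y (n - 1)‖ := by
        rw [bidiag, ← norm_mul, ← norm_mul]
        exact norm_add_le _ _
    _ ≤ (‖c‖ + ‖d‖) * M := by
        rw [add_mul]
        gcongr
        exact hy n


lemma Btrans_eq_bidiag (r s t u : ℝ) (x : ℕ × ℕ → ℂ) (m n : ℕ) :
    Btrans r s t u x (m, n) = bidiag t u (fun l => bidiag r s (fun k => x (k, l)) m) n := by
  rcases m with _ | m <;> rcases n with _ | n <;>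
    simp only [Btrans, bidiag, Nat.succ_ne_zero, or_self, or_true, true_or, if_true, if_false,
      Nat.add_sub_cancel] <;> ring

lemma sum_sum_pow_mul_Btrans {r t : ℝ} (hr : r ≠ 0) (ht : t ≠ 0) (s u : ℝ)
    (x : ℕ × ℕ → ℂ) (m n : ℕ) :
    ∑ k ∈ range (m + 1), ∑ l ∈ range (n + 1),
      ((-s : ℂ) / r) ^ (m - k) * ((-u : ℂ) / t) ^ (n - l) * Btrans r s t u x (k, l) =
      (r * t : ℂ) * x (m, n) := by
  have hcol : ∀ k, ∑ l ∈ range (n + 1), ((-u : ℂ) / t) ^ (n - l) * Btrans r s t u x (k, l) =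
      t * bidiag r s (fun k => x (k, n)) k := fun k => by
    simp only [Btrans_eq_bidiag]
    exact sum_pow_mul_bidiag (Complex.ofReal_ne_zero.mpr ht) _ _ n
  calc _ = ∑ k ∈ range (m + 1),
        t * (((-s : ℂ) / r) ^ (m - k) * bidiag r s (fun k => x (k, n)) k) := by
        refine sum_congr rfl fun k _ => ?_
        simp only [mul_assoc, ← mul_sum, hcol]
        ring
    _ = (r * t : ℂ) * x (m, n) := by
        rw [← mul_sum, sum_pow_mul_bidiag (Complex.ofReal_ne_zero.mpr hr)]
        ring

lemma norm_Btrans_le (r s t u : ℝ) {x : ℕ × ℕ → ℂ} {M : ℝ} (hx : ∀ p, ‖x p‖ ≤ M)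
    (p : ℕ × ℕ) : ‖Btrans r s t u x p‖ ≤ (|t| + |u|) * ((|r| + |s|) * M) := by
  obtain ⟨m, n⟩ := p
  simp only [Btrans_eq_bidiag, ← Complex.norm_real, ← Real.norm_eq_abs]
  exact norm_bidiag_le _ _ (fun l => norm_bidiag_le _ _ (fun k => hx _) m) n


lemma sum_range_pow_sub_le_inv {c : ℝ} (h0 : 0 ≤ c) (h1 : c < 1) (m : ℕ) :
    ∑ k ∈ range (m + 1), c ^ (m - k) ≤ (1 - c)⁻¹ := by
  have := sum_range_reflect (fun k => c ^ k) (m + 1)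
  simp only [Nat.add_sub_cancel] at this
  rw [this, range_eq_Ico]
  simpa using geom_sum_Ico_le_of_lt_one (m := 0) (n := m + 1) h0 h1

lemma norm_sum_sum_pow_mul_le {c d : ℂ} (hc : ‖c‖ < 1) (hd : ‖d‖ < 1) {y : ℕ × ℕ → ℂ}
    {M : ℝ} (hy : ∀ p, ‖y p‖ ≤ M) (m n : ℕ) :
    ‖∑ k ∈ range (m + 1), ∑ l ∈ range (n + 1), c ^ (m - k) * d ^ (n - l) * y (k, l)‖ ≤
      (1 - ‖c‖)⁻¹ * (1 - ‖d‖)⁻¹ * M := by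
  have hM : 0 ≤ M := (norm_nonneg _).trans (hy 0)
  calc _ ≤ ∑ k ∈ range (m + 1), ∑ l ∈ range (n + 1), ‖c‖ ^ (m - k) * ‖d‖ ^ (n - l) * M := by
        refine (norm_sum_le _ _).trans (sum_le_sum fun k _ => ?_)
        refine (norm_sum_le _ _).trans (sum_le_sum fun l _ => ?_)
        rw [norm_mul, norm_mul, norm_pow, norm_pow]
        gcongr
        exact hy _
    _ = (∑ k ∈ range (m + 1), ‖c‖ ^ (m - k)) * (∑ l ∈ range (n + 1), ‖d‖ ^ (n - l)) * M := by
        rw [sum_mul_sum, sum_mul]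
        simp only [sum_mul]
    _ ≤ (1 - ‖c‖)⁻¹ * (1 - ‖d‖)⁻¹ * M := by
        gcongr
        · exact sum_range_pow_sub_le_inv (norm_nonneg _) hc m
        · exact sum_range_pow_sub_le_inv (norm_nonneg _) hd n

lemma exists_norm_le_of_norm_Btrans_le {r s t u : ℝ} (hr : r ≠ 0) (ht : t ≠ 0)
    (hsr : |s / r| < 1) (hut : |u / t| < 1) {x : ℕ × ℕ → ℂ} {M : ℝ}
    (hM : ∀ p, ‖Btrans r s t u x p‖ ≤ M) : ∃ K, ∀ p, ‖x p‖ ≤ K := by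
  have hnorm : ∀ a b : ℝ, ‖(-a : ℂ) / b‖ = |a / b| := fun a b => by
    rw [norm_div, norm_neg, Complex.norm_real, Complex.norm_real, abs_div, Real.norm_eq_abs,
      Real.norm_eq_abs]
  have hrt : 0 < ‖(r * t : ℂ)‖ := norm_pos_iff.mpr (by exact_mod_cast mul_ne_zero hr ht)
  refine ⟨(1 - |s / r|)⁻¹ * (1 - |u / t|)⁻¹ * M / ‖(r * t : ℂ)‖, fun ⟨m, n⟩ => ?_⟩
  rw [le_div_iff₀ hrt, mul_comm, ← norm_mul, ← sum_sum_pow_mul_Btrans hr ht, ← hnorm, ← hnorm]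
  exact norm_sum_sum_pow_mul_le (by rwa [hnorm]) (by rwa [hnorm]) hM m n

lemma StronglyAlmostConvTo.exists_norm_le {y : ℕ × ℕ → ℂ} {L : ℂ}
    (hy : StronglyAlmostConvTo y L) : ∃ M, ∀ p, ‖y p‖ ≤ M := by
  obtain ⟨Q, hQ⟩ := hy 1 one_pos
  refine ⟨‖L‖ + (Q + 1) * (Q + 1), fun ⟨m, n⟩ => ?_⟩
  have hwindow := hQ Q Q le_rfl le_rfl m n
  rw [one_div_mul_eq_div, div_lt_one (by positivity)] at hwindow
  have hcorner : ‖y (m, n) - L‖ ≤ ∑ k ∈ range (Q + 1), ∑ l ∈ range (Q + 1),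
      ‖y (m + k, n + l) - L‖ := by
    have h0 : 0 ∈ range (Q + 1) := by simp
    refine le_trans ?_ (single_le_sum (fun k _ => sum_nonneg fun l _ => norm_nonneg _) h0)
    simpa using single_le_sum (f := fun l => ‖y (m, n + l) - L‖) (fun _ _ => norm_nonneg _) h0
  linarith [norm_le_norm_sub_add (y (m, n)) L]

lemma sum_range_add_le_tsum {f : ℕ → ℝ} (hf0 : ∀ n, 0 ≤ f n) (hf : Summable f) (m q : ℕ) :
    ∑ k ∈ range q, f (m + k) ≤ ∑' n, f n := by
  have := sum_Ico_eq_sum_range f m (m + q)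
  rw [Nat.add_sub_cancel_left] at this
  rw [← this]
  exact hf.sum_le_tsum _ fun n _ => hf0 n

lemma stronglyAlmostConvTo_of_norm_sub_le {y : ℕ × ℕ → ℂ} {L : ℂ} {f g : ℕ → ℝ}
    (hf0 : ∀ m, 0 ≤ f m) (hg0 : ∀ n, 0 ≤ g n) (hf : Summable f) (hg : Summable g)
    (hy : ∀ m n, ‖y (m, n) - L‖ ≤ f m + g n) : StronglyAlmostConvTo y L := by
  set F := ∑' m, f m
  set G := ∑' n, g n
  have hF : 0 ≤ F := tsum_nonneg hf0
  have hG : 0 ≤ G := tsum_nonneg hg0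
  intro ε hε
  obtain ⟨N, hN⟩ := exists_nat_gt ((F + G) / ε)
  rw [div_lt_iff₀ hε] at hN
  refine ⟨N, fun q q' hq hq' m n => ?_⟩
  have hwindow : ∑ k ∈ range (q + 1), ∑ l ∈ range (q' + 1), ‖y (m + k, n + l) - L‖ ≤
      (q' + 1) * F + (q + 1) * G := calc
    _ ≤ ∑ k ∈ range (q + 1), ∑ l ∈ range (q' + 1), (f (m + k) + g (n + l)) :=
        sum_le_sum fun k _ => sum_le_sum fun l _ => hy _ _
    _ = (q' + 1) * ∑ k ∈ range (q + 1), f (m + k) +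
          (q + 1) * ∑ l ∈ range (q' + 1), g (n + l) := by
        simp only [sum_add_distrib, sum_const, card_range, nsmul_eq_mul, mul_sum]
        push_cast
        ring
    _ ≤ (q' + 1) * F + (q + 1) * G := by
        gcongr
        · exact sum_range_add_le_tsum hf0 hf m _
        · exact sum_range_add_le_tsum hg0 hg n _
  have hqN : (N : ℝ) + 1 ≤ q + 1 := by gcongr
  have hq'N : (N : ℝ) + 1 ≤ q' + 1 := by gcongr
  calc _ ≤ 1 / ((q + 1) * (q' + 1)) * ((q' + 1) * F + (q + 1) * G) := by gcongr
    _ = F / (q + 1) + G / (q' + 1) := by field_simp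
    _ ≤ F / (N + 1) + G / (N + 1) := by gcongr
    _ < ε := by
        rw [← add_div, div_lt_iff₀ (by positivity)]
        linarith

lemma stronglyAlmostConvTo_of_eq_off_axes {y : ℕ × ℕ → ℂ} {L : ℂ} {M : ℝ}
    (hy : ∀ p, ‖y p - L‖ ≤ M) (hL : ∀ m n, y (m + 1, n + 1) = L) :
    StronglyAlmostConvTo y L := by
  have hM : 0 ≤ M := (norm_nonneg _).trans (hy 0)
  have hf0 : ∀ m, 0 ≤ if m = 0 then M else 0 := fun m => by split_ifs <;> simp [hM]
  refine stronglyAlmostConvTo_of_norm_sub_le hf0 hf0 (hasSum_ite_eq 0 M).summable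
    (hasSum_ite_eq 0 M).summable fun m n => ?_
  rcases m with _ | m <;> rcases n with _ | n
  · simpa using (hy _).trans (le_add_of_nonneg_left hM)
  · simpa using hy _
  · simpa using hy _
  · simp [hL]

lemma Btrans_one_stronglyAlmostConvTo (r s t u : ℝ) :
    StronglyAlmostConvTo (Btrans r s t u fun _ => 1) ((r + s) * (t + u)) := by
  refine stronglyAlmostConvTo_of_eq_off_axes (fun p => (norm_sub_le _ _).trans
    (add_le_add_left (norm_Btrans_le r s t u (fun _ => norm_one.le) p) _)) fun m n => ?_
  simp only [Btrans, Nat.succ_ne_zero, or_self, if_false, mul_one]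
  ring

theorem stmt14_general (r s t u : ℝ) (hr : r ≠ 0) (ht : t ≠ 0)
    (hsr : |s / r| < 1) (hut : |u / t| < 1) (a : ℕ × ℕ → ℂ) :
    (∀ x : ℕ × ℕ → ℂ, (∃ L, StronglyAlmostConvTo (Btrans r s t u x) L) →
      Summable (fun p : ℕ × ℕ => ‖(a p * x p)‖)) ↔
    Summable (fun p : ℕ × ℕ => ‖(a p)‖) := by
  constructor
  · intro h
    simpa using h (fun _ => 1) ⟨_, Btrans_one_stronglyAlmostConvTo r s t u⟩
  · rintro ha x ⟨L, hL⟩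
    obtain ⟨M, hM⟩ := hL.exists_norm_le
    obtain ⟨K, hK⟩ := exists_norm_le_of_norm_Btrans_le hr ht hsr hut hM
    refine (ha.mul_left K).of_nonneg_of_le (fun _ => norm_nonneg _) fun p => ?_
    rw [norm_mul, mul_comm]
    exact mul_le_mul_of_nonneg_right (hK p) (norm_nonneg _)

/-- If `|s/r| < 1` and `|u/t| < 1`, then the α-dual of `B[C_f]` is
`L_u`: `Σ_{k,l} |a_{kl} x_{kl}| < ∞` for every `x ∈ B[C_f]` iff `Σ_{k,l} |a_{kl}| < ∞`. -/
theorem stmt14 (r s t u : ℝ) (hr : r ≠ 0) (hs : s ≠ 0) (ht : t ≠ 0) (hu : u ≠ 0)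
    (hsr : |s / r| < 1) (hut : |u / t| < 1) (a : ℕ × ℕ → ℂ) :
    (∀ x : ℕ × ℕ → ℂ, (∃ L, StronglyAlmostConvTo (Btrans r s t u x) L) →
      Summable (fun p : ℕ × ℕ => ‖(a p * x p)‖)) ↔
    Summable (fun p : ℕ × ℕ => ‖(a p)‖) :=
  stmt14_general r s t u hr ht hsr hut a
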